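/- arXiv:2309.02441 — 2 statements merged into one kernel-verified Lean document; each statement's English description precedes it below -/
import Mathlib

section
/- Let v1,v2,v3,v4 ∈ ℝ² form a convex quadrilateral in counterclockwise cyclic order and let Q be their convex hull. Then for every p ∈ Q, the unique solution φ(p) ∈ ℝ⁴ of the moment system M(p)φ = (1, p1, p2, 0) satisfies φ_i(p) ≥ 0 for all i, φ1 + φ2 + φ3 + φ4 = 1, and φ1 v1 + φ2 v2 + φ3 v3 + φ4 v4 = p. -/
open Matrix

/-- Signed area of the triangle `(a,b,c)` in the plane. -/
noncomputable def sArea (a b c : EuclideanSpace ℝ (Fin 2)) : ℝ :=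
  ((b 0 - a 0) * (c 1 - a 1) - (b 1 - a 1) * (c 0 - a 0)) / 2

/-- `v` lists the vertices of a convex quadrilateral in counterclockwise cyclic order. -/
def ConvexCCW (v : Fin 4 → EuclideanSpace ℝ (Fin 2)) : Prop :=
  ∀ i : Fin 4, 0 < sArea (v i) (v (i + 1)) (v (i + 2))

/-- The moment system matrix `M(p)`: rows `(1,1,1,1)`, the two coordinate rows of the
vertices, and `(d₁(p), -d₂(p), d₃(p), -d₄(p))` where `dᵢ(p) = ‖p - vᵢ‖`. -/
noncomputable def momentMatrix (v : Fin 4 → EuclideanSpace ℝ (Fin 2))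
    (p : EuclideanSpace ℝ (Fin 2)) : Matrix (Fin 4) (Fin 4) ℝ :=
  Matrix.of ![fun i => 1, fun i => v i 0, fun i => v i 1,
              ![‖p - v 0‖, -‖p - v 1‖, ‖p - v 2‖, -‖p - v 3‖]]

/-!
The first three rows of `M(p)` say that `φ` represents `p` as an affine combination of the
vertices. These representations form the line `c + t • w`, where `c` is a convex representation
(available since `p ∈ Q`) and `w` spans the kernel of the three rows; convexity makes the signs of
`w` alternate, so the last row is affine in `t` with slope `∑ dᵢ |wᵢ| > 0`, and `det M(p) ≠ 0`.
Moving from `c` along the line until a coordinate with `wᵢ < 0` vanishes, `p` becomes a convex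
combination of three vertices, and the triangle inequality `φⱼ dⱼ ≤ ∑_{i ≠ j} φᵢ dᵢ` makes the
last row nonnegative there; moving the other way makes it nonpositive. Hence its zero lies between
two points of the line with nonnegative coordinates.
-/

theorem mem_convexHull_range_iff_exists_stdSimplex {ι E : Type*} [Fintype ι] [AddCommGroup E]
    [Module ℝ E] {v : ι → E} {x : E} :
    x ∈ convexHull ℝ (Set.range v) ↔ ∃ w ∈ stdSimplex ℝ ι, ∑ i, w i • v i = x := by
  classical
  have hv : Set.range v =
      Fintype.linearCombination ℝ v '' Set.range fun i j => if i = j then (1 : ℝ) else 0 := by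
    rw [← Set.range_comp]
    congr 1
    ext i
    simp [Fintype.linearCombination_apply]
  rw [hv, ← LinearMap.image_convexHull, convexHull_basis_eq_stdSimplex]
  simp [Fintype.linearCombination_apply]

theorem two_mul_norm_le_sum_norm_of_sum_eq_zero {ι E : Type*} [SeminormedAddCommGroup E]
    {s : Finset ι} {y : ι → E} (h : ∑ i ∈ s, y i = 0) {j : ι} (hj : j ∈ s) :
    2 * ‖y j‖ ≤ ∑ i ∈ s, ‖y i‖ := by
  classical
  rw [← Finset.add_sum_erase s _ hj] at h ⊢
  have hyj : ‖y j‖ ≤ ∑ i ∈ s.erase j, ‖y i‖ := by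
    rw [eq_neg_of_add_eq_zero_left h, norm_neg]
    exact norm_sum_le _ _
  linarith

theorem two_mul_mul_norm_sub_le_sum {ι E : Type*} [Fintype ι] [SeminormedAddCommGroup E]
    [NormedSpace ℝ E] {v : ι → E} {p : E} {ψ : ι → ℝ} (hψ : 0 ≤ ψ) (h1 : ∑ i, ψ i = 1)
    (hp : ∑ i, ψ i • v i = p) (j : ι) :
    2 * (ψ j * ‖p - v j‖) ≤ ∑ i, ψ i * ‖p - v i‖ := by
  have hsum : ∑ i, ψ i • (p - v i) = 0 := by
    simp only [smul_sub, Finset.sum_sub_distrib, ← Finset.sum_smul, h1, one_smul, hp, sub_self]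
  have hnorm (i : ι) : ‖ψ i • (p - v i)‖ = ψ i * ‖p - v i‖ := by
    rw [norm_smul, Real.norm_of_nonneg (hψ i)]
  simpa only [hnorm] using two_mul_norm_le_sum_norm_of_sum_eq_zero hsum (Finset.mem_univ j)

theorem exists_nonneg_add_smul_eq_zero {ι : Type*} [Fintype ι] {c w : ι → ℝ} (hc : 0 ≤ c)
    {j₀ : ι} (hj₀ : w j₀ < 0) :
    ∃ s, 0 ≤ c + s • w ∧ ∃ j, w j < 0 ∧ c j + s * w j = 0 := by
  classical
  obtain ⟨j, hj, hmin⟩ := (Finset.univ.filter fun i => w i < 0).exists_min_image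
    (fun i => c i / -w i) ⟨j₀, by simpa using hj₀⟩
  rw [Finset.mem_filter] at hj
  have hs : 0 ≤ c j / -w j := div_nonneg (hc j) (neg_nonneg.2 hj.2.le)
  refine ⟨c j / -w j, fun i => ?_, j, hj.2, ?_⟩
  · simp only [Pi.zero_apply, Pi.add_apply, Pi.smul_apply, smul_eq_mul]
    rcases le_or_gt 0 (w i) with hwi | hwi
    · have hci : 0 ≤ c i := hc i
      nlinarith [mul_nonneg hs hwi]
    · have hle := (le_div_iff₀ (neg_pos.2 hwi)).1 (hmin i (by simpa using hwi))
      linarith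
  · field_simp [hj.2.ne]
    ring

theorem nonneg_add_smul_of_le_of_le {ι : Type*} {c w : ι → ℝ} {a b t : ℝ}
    (ha : 0 ≤ c + a • w) (hb : 0 ≤ c + b • w) (hat : a ≤ t) (htb : t ≤ b) :
    0 ≤ c + t • w := fun i => by
  have hai := ha i
  have hbi := hb i
  simp only [Pi.zero_apply, Pi.add_apply, Pi.smul_apply, smul_eq_mul] at hai hbi ⊢
  rcases le_total 0 (w i) with hwi | hwi <;> nlinarith

/-- Up to the factor `-2`, the cofactors of the last row of `momentMatrix`; hence a kernel vector
of its first three rows. -/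
noncomputable def quadKernel (v : Fin 4 → EuclideanSpace ℝ (Fin 2)) : Fin 4 → ℝ :=
  ![sArea (v 1) (v 2) (v 3), -sArea (v 2) (v 3) (v 0), sArea (v 3) (v 0) (v 1),
    -sArea (v 0) (v 1) (v 2)]

section Quadrilateral

variable {v : Fin 4 → EuclideanSpace ℝ (Fin 2)} {p : EuclideanSpace ℝ (Fin 2)}

theorem sum_quadKernel : ∑ i, quadKernel v i = 0 := by
  simp only [Fin.sum_univ_four, quadKernel, sArea, Matrix.cons_val]
  ring

theorem sum_quadKernel_smul : ∑ i, quadKernel v i • v i = 0 := by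
  ext k
  fin_cases k <;>
    simp [Fin.sum_univ_four, quadKernel, sArea] <;> ring

theorem sum_add_smul_quadKernel (c : Fin 4 → ℝ) (t : ℝ) :
    ∑ i, (c + t • quadKernel v) i = ∑ i, c i := by
  simp [Finset.sum_add_distrib, ← Finset.mul_sum, sum_quadKernel]

theorem sum_add_smul_quadKernel_smul (c : Fin 4 → ℝ) (t : ℝ) :
    ∑ i, (c + t • quadKernel v) i • v i = ∑ i, c i • v i := by
  simp [add_smul, Finset.sum_add_distrib, mul_smul, ← Finset.smul_sum, sum_quadKernel_smul]

theorem quadKernel_signs (hccw : ConvexCCW v) :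
    0 < quadKernel v 0 ∧ quadKernel v 1 < 0 ∧ 0 < quadKernel v 2 ∧ quadKernel v 3 < 0 :=
  ⟨hccw 1, neg_neg_of_pos (hccw 2), hccw 3, neg_neg_of_pos (hccw 0)⟩

theorem det_momentMatrix :
    (momentMatrix v p).det = -2 * (momentMatrix v p 3 ⬝ᵥ quadKernel v) := by
  simp [Matrix.det_succ_row_zero, Fin.sum_univ_succ, momentMatrix, quadKernel, sArea, dotProduct,
    Fin.succAbove]
  ring

theorem momentMatrix_three_dotProduct_quadKernel_pos (hccw : ConvexCCW v) :
    0 < momentMatrix v p 3 ⬝ᵥ quadKernel v := by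
  obtain ⟨hw0, hw1, hw2, hw3⟩ := quadKernel_signs hccw
  have hv01 : v 0 ≠ v 1 := by
    intro h
    have := hccw 0
    simp [sArea, h] at this
  have hd : 0 < ‖p - v 0‖ ∨ 0 < ‖p - v 1‖ := by
    by_contra! h
    rw [norm_le_zero_iff, sub_eq_zero, norm_le_zero_iff, sub_eq_zero] at h
    exact hv01 (h.1.symm.trans h.2)
  simp only [dotProduct, Fin.sum_univ_four, momentMatrix, Matrix.of_apply, Matrix.cons_val]
  rcases hd with hd | hd <;>
    nlinarith [norm_nonneg (p - v 0), norm_nonneg (p - v 1), norm_nonneg (p - v 2),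
      norm_nonneg (p - v 3)]

theorem momentMatrix_mulVec_eq_iff {φ : Fin 4 → ℝ} :
    momentMatrix v p *ᵥ φ = ![1, p 0, p 1, 0] ↔
      ∑ i, φ i = 1 ∧ ∑ i, φ i • v i = p ∧ momentMatrix v p 3 ⬝ᵥ φ = 0 := by
  have hp : ∑ i, φ i • v i = p ↔ ∑ i, φ i * v i 0 = p 0 ∧ ∑ i, φ i * v i 1 = p 1 := by
    simp [PiLp.ext_iff, Fin.forall_fin_two]
  rw [hp, funext_iff, Fin.forall_fin_succ, Fin.forall_fin_succ, Fin.forall_fin_succ,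
    Fin.forall_fin_one]
  simp [mulVec, dotProduct, momentMatrix, mul_comm, and_assoc]

theorem momentMatrix_three_dotProduct_nonneg {ψ : Fin 4 → ℝ} (hψ : 0 ≤ ψ) (h1 : ∑ i, ψ i = 1)
    (hp : ∑ i, ψ i • v i = p) (h : ψ 1 = 0 ∨ ψ 3 = 0) : 0 ≤ momentMatrix v p 3 ⬝ᵥ ψ := by
  have h₁ := two_mul_mul_norm_sub_le_sum hψ h1 hp 1
  have h₃ := two_mul_mul_norm_sub_le_sum hψ h1 hp 3
  simp only [Fin.sum_univ_four] at h₁ h₃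
  simp only [dotProduct, Fin.sum_univ_four, momentMatrix, Matrix.of_apply, Matrix.cons_val]
  rcases h with h | h <;> simp only [h, zero_mul, mul_zero] at h₁ h₃ ⊢ <;> linarith

theorem momentMatrix_three_dotProduct_nonpos {ψ : Fin 4 → ℝ} (hψ : 0 ≤ ψ) (h1 : ∑ i, ψ i = 1)
    (hp : ∑ i, ψ i • v i = p) (h : ψ 0 = 0 ∨ ψ 2 = 0) : momentMatrix v p 3 ⬝ᵥ ψ ≤ 0 := by
  have h₀ := two_mul_mul_norm_sub_le_sum hψ h1 hp 0
  have h₂ := two_mul_mul_norm_sub_le_sum hψ h1 hp 2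
  simp only [Fin.sum_univ_four] at h₀ h₂
  simp only [dotProduct, Fin.sum_univ_four, momentMatrix, Matrix.of_apply, Matrix.cons_val]
  rcases h with h | h <;> simp only [h, zero_mul, mul_zero] at h₀ h₂ ⊢ <;> linarith

theorem nonneg_add_smul_quadKernel (hccw : ConvexCCW v) {c : Fin 4 → ℝ} (hc : 0 ≤ c)
    (h1 : ∑ i, c i = 1) (hp : ∑ i, c i • v i = p) {t : ℝ}
    (ht : momentMatrix v p 3 ⬝ᵥ (c + t • quadKernel v) = 0) : 0 ≤ c + t • quadKernel v := by
  have hD : 0 < momentMatrix v p 3 ⬝ᵥ quadKernel v := momentMatrix_three_dotProduct_quadKernel_pos hccw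
  obtain ⟨hw0, hw1, hw2, hw3⟩ := quadKernel_signs hccw
  have hsum (s : ℝ) : ∑ i, (c + s • quadKernel v) i = 1 := (sum_add_smul_quadKernel c s).trans h1
  have hrep (s : ℝ) : ∑ i, (c + s • quadKernel v) i • v i = p :=
    (sum_add_smul_quadKernel_smul c s).trans hp
  have hL (s : ℝ) : momentMatrix v p 3 ⬝ᵥ (c + s • quadKernel v) =
      momentMatrix v p 3 ⬝ᵥ c + s * (momentMatrix v p 3 ⬝ᵥ quadKernel v) := by
    rw [dotProduct_add, dotProduct_smul, smul_eq_mul]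
  obtain ⟨s, hs, j, hj, hsj⟩ := exists_nonneg_add_smul_eq_zero hc hw1
  have hts : t ≤ s := by
    have hvanish : (c + s • quadKernel v) 1 = 0 ∨ (c + s • quadKernel v) 3 = 0 := by
      fin_cases j
      · exact absurd hj hw0.not_gt
      · exact Or.inl hsj
      · exact absurd hj hw2.not_gt
      · exact Or.inr hsj
    have := momentMatrix_three_dotProduct_nonneg hs (hsum s) (hrep s) hvanish
    rw [hL] at this ht
    nlinarith
  obtain ⟨s', hs', j', hj', hsj'⟩ :=
    exists_nonneg_add_smul_eq_zero (w := -quadKernel v) hc (neg_neg_of_pos hw0)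
  rw [smul_neg, ← neg_smul] at hs'
  have hst : -s' ≤ t := by
    have hvanish : (c + -s' • quadKernel v) 0 = 0 ∨ (c + -s' • quadKernel v) 2 = 0 := by
      fin_cases j' <;> simp at hj' hsj' ⊢
      · left; linarith
      · linarith
      · right; linarith
      · linarith
    have := momentMatrix_three_dotProduct_nonpos hs' (hsum _) (hrep _) hvanish
    rw [hL] at this ht
    nlinarith
  exact nonneg_add_smul_of_le_of_le hs' hs hst hts

end Quadrilateral

/-- For `p` in the convex hull `Q` of a convex quadrilateral
(counterclockwise order), the moment system `M(p)φ = (1, p₁, p₂, 0)` has a unique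
solution, and this solution is componentwise nonnegative, sums to `1`, and
reproduces `p` as a combination of the vertices. -/
theorem moment_coordinates_props (v : Fin 4 → EuclideanSpace ℝ (Fin 2))
    (hccw : ConvexCCW v) (p : EuclideanSpace ℝ (Fin 2))
    (hp : p ∈ convexHull ℝ {v 0, v 1, v 2, v 3}) :
    (∃! φ : Fin 4 → ℝ, (momentMatrix v p).mulVec φ = ![1, p 0, p 1, 0]) ∧
    ∀ φ : Fin 4 → ℝ, (momentMatrix v p).mulVec φ = ![1, p 0, p 1, 0] →
      (∀ i, 0 ≤ φ i) ∧ φ 0 + φ 1 + φ 2 + φ 3 = 1 ∧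
      φ 0 • v 0 + φ 1 • v 1 + φ 2 • v 2 + φ 3 • v 3 = p := by
  have hrange : ({v 0, v 1, v 2, v 3} : Set (EuclideanSpace ℝ (Fin 2))) = Set.range v := by
    simp [Set.ext_iff, Fin.exists_fin_succ, eq_comm]
  rw [hrange, mem_convexHull_range_iff_exists_stdSimplex] at hp
  obtain ⟨c, ⟨hc, hc1⟩, hcp⟩ := hp
  have hD := momentMatrix_three_dotProduct_quadKernel_pos (p := p) hccw
  obtain ⟨t, ht⟩ : ∃ t, momentMatrix v p 3 ⬝ᵥ (c + t • quadKernel v) = 0 := by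
    refine ⟨-(momentMatrix v p 3 ⬝ᵥ c) / (momentMatrix v p 3 ⬝ᵥ quadKernel v), ?_⟩
    rw [dotProduct_add, dotProduct_smul, smul_eq_mul]
    field_simp
    ring
  set φ₀ := c + t • quadKernel v
  have hsol : momentMatrix v p *ᵥ φ₀ = ![1, p 0, p 1, 0] :=
    momentMatrix_mulVec_eq_iff.2 ⟨(sum_add_smul_quadKernel c _).trans hc1,
      (sum_add_smul_quadKernel_smul c _).trans hcp, ht⟩
  have huniq (φ : Fin 4 → ℝ) (hφ : momentMatrix v p *ᵥ φ = ![1, p 0, p 1, 0]) : φ = φ₀ := by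
    have hdet : (momentMatrix v p).det ≠ 0 := by
      rw [det_momentMatrix]
      exact mul_ne_zero (by norm_num) hD.ne'
    exact sub_eq_zero.1 (eq_zero_of_mulVec_eq_zero hdet (by rw [mulVec_sub, hφ, hsol, sub_self]))
  refine ⟨⟨φ₀, hsol, huniq⟩, fun φ hφ => ?_⟩
  obtain ⟨hsum, hrep, -⟩ := momentMatrix_mulVec_eq_iff.1 hφ
  rw [Fin.sum_univ_four] at hsum hrep
  exact ⟨huniq φ hφ ▸ nonneg_add_smul_quadKernel hccw hc hc1 hcp ht, hsum, hrep⟩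
end

section
/- Let v1,v2,v3,v4 ∈ ℝ² form a convex quadrilateral in counterclockwise cyclic order. Then for each j ∈ {1,2,3,4}, the unique solution of the moment system M(v_j)φ = (1, v_j¹, v_j², 0) is the j-th standard basis vector of ℝ⁴, i.e. the moment coordinates satisfy the Kronecker-delta property φ_i(v_j) = δ_{ij}. -/
open Matrix

/-! At a vertex `vⱼ` the `j`-th column of `M(vⱼ)` is `(1, vⱼ, 0)`, so `eⱼ` solves the system.
Cofactor expansion gives `det M(p) = -2 ∑ᵢ dᵢ(p) · Sᵢ`, where `Sᵢ` is the signed area of the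
triangle formed by the three vertices other than `vᵢ`. Convexity makes every `Sᵢ` positive, and
at `p = vⱼ` the distance `d_{j+1}(p)` is positive, so the determinant is negative and the solution
is unique. -/

theorem momentMatrix_det (v : Fin 4 → EuclideanSpace ℝ (Fin 2)) (p : EuclideanSpace ℝ (Fin 2)) :
    (momentMatrix v p).det =
      -2 * ∑ i, ‖p - v i‖ * sArea (v (i + 1)) (v (i + 2)) (v (i + 3)) := by
  simp [momentMatrix, det_succ_row_zero, Fin.sum_univ_succ, sArea, Fin.succAbove]
  ring

theorem momentMatrix_mulVec_single (v : Fin 4 → EuclideanSpace ℝ (Fin 2))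
    (p : EuclideanSpace ℝ (Fin 2)) (j : Fin 4) :
    (momentMatrix v p).mulVec (Pi.single j 1) =
      ![1, v j 0, v j 1, (-1) ^ (j : ℕ) * ‖p - v j‖] := by
  rw [mulVec_single]
  funext i
  fin_cases j <;> fin_cases i <;> simp [momentMatrix, pow_succ]

namespace ConvexCCW

variable {v : Fin 4 → EuclideanSpace ℝ (Fin 2)}

theorem ne_add_one (hccw : ConvexCCW v) (i : Fin 4) : v i ≠ v (i + 1) := by
  intro h
  simpa [← h, sArea] using hccw i

theorem sArea_opposite_pos (hccw : ConvexCCW v) (i : Fin 4) :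
    0 < sArea (v (i + 1)) (v (i + 2)) (v (i + 3)) := by
  have h := hccw (i + 1)
  rwa [add_assoc, add_assoc, show (1 + 1 : Fin 4) = 2 from rfl,
    show (1 + 2 : Fin 4) = 3 from rfl] at h

theorem momentMatrix_det_vertex_neg (hccw : ConvexCCW v) (j : Fin 4) :
    (momentMatrix v (v j)).det < 0 := by
  have hterm (i : Fin 4) : 0 ≤ ‖v j - v i‖ * sArea (v (i + 1)) (v (i + 2)) (v (i + 3)) :=
    mul_nonneg (norm_nonneg _) (hccw.sArea_opposite_pos i).le
  have hnext : 0 < ‖v j - v (j + 1)‖ *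
      sArea (v (j + 1 + 1)) (v (j + 1 + 2)) (v (j + 1 + 3)) :=
    mul_pos (norm_pos_iff.2 (sub_ne_zero.2 (hccw.ne_add_one j))) (hccw.sArea_opposite_pos _)
  have hsum := Finset.sum_pos' (fun i _ => hterm i) ⟨j + 1, Finset.mem_univ _, hnext⟩
  rw [momentMatrix_det]
  linarith

end ConvexCCW

/-- At each vertex `vⱼ` of a convex quadrilateral (counterclockwise
order), the unique solution of the moment system `M(vⱼ)φ = (1, vⱼ¹, vⱼ², 0)` is the
`j`-th standard basis vector: the moment coordinates satisfy the Kronecker-delta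
property. -/
theorem moment_coordinates_kronecker (v : Fin 4 → EuclideanSpace ℝ (Fin 2))
    (hccw : ConvexCCW v) (j : Fin 4) :
    (momentMatrix v (v j)).mulVec (Pi.single j 1) = ![1, v j 0, v j 1, 0] ∧
    ∀ φ : Fin 4 → ℝ, (momentMatrix v (v j)).mulVec φ = ![1, v j 0, v j 1, 0] →
      φ = Pi.single j 1 := by
  have hcol : (momentMatrix v (v j)).mulVec (Pi.single j 1) = ![1, v j 0, v j 1, 0] := by
    simpa using momentMatrix_mulVec_single v (v j) j
  have hunit : IsUnit (momentMatrix v (v j)) :=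
    (isUnit_iff_isUnit_det _).2 (hccw.momentMatrix_det_vertex_neg j).ne.isUnit
  exact ⟨hcol, fun φ hφ => mulVec_injective_iff_isUnit.2 hunit (hφ.trans hcol.symm)⟩
end
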